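/- arXiv:2505.10964 — 2 statements merged into one kernel-verified Lean document; each statement's English description precedes it below -/
import Mathlib

section
/- Let D₁ and D₂ be bounded proper subdomains of ℂ, and let f(z) = (az + b)/(cz + d) with a, b, c, d ∈ ℂ and ad − bc ≠ 0 be a Möbius transformation mapping D₁ onto D₂ (with the pole of f outside the closure of D₁). Then for every z ∈ D₁, m_{D₁}(z) ≤ 4·|f'(z)|·m_{D₂}(f(z)). -/
open Metric Set

variable {E : Type*} [NormedAddCommGroup E] [NormedSpace ℝ E]

/-- δ_D(z): the Euclidean distance from `z` to the boundary `∂D`. -/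
noncomputable def bdist (D : Set E) (z : E) : ℝ := Metric.infDist z (frontier D)

/-- The m-density `m_D(z) = d(D) / (δ_D(z)·(d(D) − δ_D(z)))`. -/
noncomputable def mDensity (D : Set E) (z : E) : ℝ :=
  Metric.diam D / (bdist D z * (Metric.diam D - bdist D z))

/-- A rectifiable path in `D` from `x` to `y`, modeled as a Lipschitz map on `[0,1]`. -/
def IsRectPathIn (D : Set E) (x y : E) (γ : ℝ → E) : Prop :=
  (∃ K : NNReal, LipschitzWith K γ) ∧ γ 0 = x ∧ γ 1 = y ∧ ∀ t ∈ Set.Icc (0:ℝ) 1, γ t ∈ D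

/-- The line integral `∫_γ ρ(z) |dz|` of a density `ρ` along a path `γ`. -/
noncomputable def pathIntegral (ρ : E → ℝ) (γ : ℝ → E) : ℝ :=
  ∫ t in (0:ℝ)..1, ρ (γ t) * ‖deriv γ t‖

/-- `inf_γ ∫_γ ρ(z)|dz|` over all rectifiable paths `γ` joining `x` and `y` in `D`. -/
noncomputable def pathDist (ρ : E → ℝ) (D : Set E) (x y : E) : ℝ :=
  sInf (pathIntegral ρ '' {γ | IsRectPathIn D x y γ})

/-- The metric `m_D`. -/
noncomputable def mDist (D : Set E) (x y : E) : ℝ := pathDist (mDensity D) D x y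

/-- The quasihyperbolic metric `k_D`. -/
noncomputable def kDist (D : Set E) (x y : E) : ℝ :=
  pathDist (fun z => 1 / bdist D z) D x y

/-!
Write `δ_D(z)` for the distance from `z` to the complement of `D` (for `z ∈ D` this is
`bdist D z`). Since a disc of radius `δ_D(z)` fits into `D`, `2δ_D(z) ≤ d(D)`, which squeezes the
m-density: `1/δ_D(z) ≤ m_D(z) ≤ 2/δ_D(z)`. So it suffices to show
`δ_{D₂}(f z) ≤ 2 |f'(z)| δ_{D₁}(z)`. By
`|f z - f ζ| = |f'(z)| |z - ζ| |cz + d| / |cζ + d|` it is enough to find `ζ ∉ D₁` with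
`|z - ζ| |z - p| ≤ 2 δ_{D₁}(z) |ζ - p|`, `p = -d/c` the pole: when `|z - p| ≥ 2δ_{D₁}(z)` a nearest
point `ζ` of the complement works, and otherwise any point of the complement on the ray from `p`
through `z` does.
-/

theorem Bornology.IsBounded.ne_univ [Nontrivial E] {D : Set E} (h : Bornology.IsBounded D) :
    D ≠ univ :=
  fun hD => NormedSpace.unbounded_univ ℝ E (hD ▸ h)

theorem bdist_eq_infDist_compl [FiniteDimensional ℝ E] {D : Set E} {z : E} (hz : z ∈ D) :
    bdist D z = infDist z Dᶜ := by
  rcases eq_or_ne D univ with rfl | hD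
  · simp [bdist]
  obtain ⟨ζ, hζ, hdist⟩ := exists_mem_frontier_infDist_compl_eq_dist hz hD
  refine le_antisymm (hdist ▸ infDist_le_dist_of_mem hζ) ?_
  rw [← infDist_closure]
  exact infDist_le_infDist_of_subset (frontier_compl D ▸ frontier_subset_closure) ⟨ζ, hζ⟩

section Bounded

variable [FiniteDimensional ℝ E] [Nontrivial E] {D : Set E} {z : E}

theorem bdist_pos (hD : IsOpen D) (hbdd : Bornology.IsBounded D) (hz : z ∈ D) :
    0 < bdist D z :=
  bdist_eq_infDist_compl hz ▸
    (hD.isClosed_compl.notMem_iff_infDist_pos (nonempty_compl.2 hbdd.ne_univ)).1 (· hz)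

theorem two_mul_bdist_le_diam (hbdd : Bornology.IsBounded D) (hz : z ∈ D) :
    2 * bdist D z ≤ diam D :=
  bdist_eq_infDist_compl hz ▸
    (diam_ball_eq z infDist_nonneg).symm.le.trans (diam_mono ball_infDist_compl_subset hbdd)

end Bounded

section Density

variable {F : Type*} [NormedAddCommGroup F] {D : Set F} {z : F}

theorem mDensity_le_two_div_bdist (h : 2 * bdist D z ≤ diam D) :
    mDensity D z ≤ 2 / bdist D z := by
  rcases (show 0 ≤ bdist D z from infDist_nonneg).eq_or_lt with h0 | hpos
  · simp [mDensity, ← h0]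
  rw [mDensity, div_le_div_iff₀ (by nlinarith) hpos]
  nlinarith

theorem inv_bdist_le_mDensity (h : 2 * bdist D z ≤ diam D) :
    (bdist D z)⁻¹ ≤ mDensity D z := by
  rcases (show 0 ≤ bdist D z from infDist_nonneg).eq_or_lt with h0 | hpos
  · simp [mDensity, ← h0]
  rw [mDensity, ← one_div, div_le_div_iff₀ hpos (by nlinarith)]
  nlinarith

end Density

theorem exists_notMem_dist_mul_dist_le [ProperSpace E] {D : Set E} (hD : IsOpen D)
    (hbdd : Bornology.IsBounded D) {z p : E} (hz : z ∈ D) (hp : p ∉ D) :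
    ∃ ζ ∉ D, dist z ζ * dist z p ≤ 2 * infDist z Dᶜ * dist ζ p := by
  set δ := infDist z Dᶜ
  set σ := dist z p
  have hσ : 0 < σ := dist_pos.2 (ne_of_mem_of_not_mem hz hp)
  rcases le_or_gt (2 * δ) σ with hfar | hnear
  · obtain ⟨ζ, hζ, hδ⟩ := hD.isClosed_compl.exists_infDist_eq_dist ⟨p, hp⟩ z
    refine ⟨ζ, hζ, ?_⟩
    have := dist_triangle z ζ p
    rw [← hδ]
    nlinarith [(infDist_nonneg : 0 ≤ δ)]
  · set t := diam D / σ + 1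
    have ht : 0 ≤ t := by positivity
    have hdist : dist z (z + t • (z - p)) = t * σ := by
      rw [dist_self_add_right, norm_smul, Real.norm_of_nonneg ht, ← dist_eq_norm]
    refine ⟨z + t • (z - p), fun hζ => ?_, ?_⟩
    · have := dist_le_diam_of_mem hbdd hz hζ
      rw [hdist, add_mul, div_mul_cancel₀ _ hσ.ne'] at this
      linarith
    · have : dist (z + t • (z - p)) p = (1 + t) * σ := by
        rw [dist_eq_norm, show z + t • (z - p) - p = (1 + t) • (z - p) by module, norm_smul,
          ← dist_eq_norm, Real.norm_of_nonneg (by positivity)]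
      rw [hdist, this]
      nlinarith [mul_le_mul_of_nonneg_left hnear.le (mul_nonneg ht hσ.le),
        mul_nonneg (infDist_nonneg : 0 ≤ δ) hσ.le]

noncomputable def moebius (a b c d z : ℂ) : ℂ := (a * z + b) / (c * z + d)

section Moebius

variable {a b c d : ℂ}

theorem moebius_sub_moebius {z w : ℂ} (hz : c * z + d ≠ 0) (hw : c * w + d ≠ 0) :
    moebius a b c d z - moebius a b c d w
      = (a * d - b * c) * (z - w) / ((c * z + d) * (c * w + d)) := by
  rw [moebius, moebius, div_sub_div _ _ hz hw]
  ring

theorem dist_moebius {z w : ℂ} (hz : c * z + d ≠ 0) (hw : c * w + d ≠ 0) :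
    dist (moebius a b c d z) (moebius a b c d w)
      = ‖a * d - b * c‖ * dist z w / (‖c * z + d‖ * ‖c * w + d‖) := by
  rw [dist_eq_norm, moebius_sub_moebius hz hw, norm_div, norm_mul, norm_mul, dist_eq_norm]

theorem moebius_injOn (habcd : a * d - b * c ≠ 0) :
    InjOn (moebius a b c d) {z | c * z + d ≠ 0} := by
  intro z (hz : c * z + d ≠ 0) w (hw : c * w + d ≠ 0) h
  rw [← sub_eq_zero, moebius_sub_moebius hz hw, div_eq_zero_iff, mul_eq_zero, mul_eq_zero] at h
  simpa [habcd, hz, hw, sub_eq_zero] using h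

theorem hasDerivAt_moebius {z : ℂ} (hz : c * z + d ≠ 0) :
    HasDerivAt (moebius a b c d) ((a * d - b * c) / (c * z + d) ^ 2) z := by
  have h := (((hasDerivAt_id z).const_mul a).add_const b).div
    (((hasDerivAt_id z).const_mul c).add_const d) hz
  simp only [id, mul_one] at h
  exact h.congr_deriv (by ring)

theorem norm_deriv_moebius {z : ℂ} (hz : c * z + d ≠ 0) :
    ‖deriv (moebius a b c d) z‖ = ‖a * d - b * c‖ / ‖c * z + d‖ ^ 2 := by
  rw [(hasDerivAt_moebius hz).deriv, norm_div, norm_pow]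

theorem exists_notMem_dist_mul_norm_le {D : Set ℂ} (hD : IsOpen D) (hbdd : Bornology.IsBounded D)
    (hpole : ∀ w ∈ D, c * w + d ≠ 0) {z : ℂ} (hz : z ∈ D) :
    ∃ ζ ∉ D, dist z ζ * ‖c * z + d‖ ≤ 2 * infDist z Dᶜ * ‖c * ζ + d‖ := by
  rcases eq_or_ne c 0 with rfl | hc
  · obtain ⟨ζ, hζ, hδ⟩ :=
      hD.isClosed_compl.exists_infDist_eq_dist (nonempty_compl.2 hbdd.ne_univ) z
    refine ⟨ζ, hζ, ?_⟩
    rw [zero_mul, zero_add, zero_mul, zero_add, ← hδ]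
    nlinarith [norm_nonneg d, (infDist_nonneg : 0 ≤ infDist z Dᶜ)]
  · have hnorm : ∀ w, ‖c * w + d‖ = ‖c‖ * dist w (-d / c) := fun w => by
      rw [dist_eq_norm, ← norm_mul]
      congr 1
      field_simp
      ring
    have hp : -d / c ∉ D := fun h => hpole _ h (by rw [mul_div_cancel₀ _ hc]; ring)
    obtain ⟨ζ, hζ, hle⟩ := exists_notMem_dist_mul_dist_le hD hbdd hz hp
    refine ⟨ζ, hζ, ?_⟩
    rw [hnorm, hnorm]
    nlinarith [mul_le_mul_of_nonneg_left hle (norm_nonneg c)]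

theorem infDist_compl_image_moebius_le (habcd : a * d - b * c ≠ 0) {D : Set ℂ} (hD : IsOpen D)
    (hbdd : Bornology.IsBounded D) (hpole : ∀ w ∈ D, c * w + d ≠ 0) {z : ℂ} (hz : z ∈ D) :
    infDist (moebius a b c d z) (moebius a b c d '' D)ᶜ
      ≤ 2 * ‖deriv (moebius a b c d) z‖ * infDist z Dᶜ := by
  obtain ⟨ζ, hζ, hle⟩ := exists_notMem_dist_mul_norm_le hD hbdd hpole hz
  have hzd := norm_pos_iff.2 (hpole z hz)
  -- `ζ` is not the pole: the left side of `hle` is positive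
  have hζd : 0 < ‖c * ζ + d‖ := by
    have := mul_pos (dist_pos.2 (ne_of_mem_of_not_mem hz hζ)) hzd
    nlinarith [(infDist_nonneg : 0 ≤ infDist z Dᶜ), norm_nonneg (c * ζ + d)]
  have hfζ : moebius a b c d ζ ∉ moebius a b c d '' D := by
    rintro ⟨w, hw, hwζ⟩
    exact hζ (moebius_injOn habcd (hpole w hw) (norm_pos_iff.1 hζd) hwζ ▸ hw)
  calc infDist (moebius a b c d z) (moebius a b c d '' D)ᶜ
      ≤ dist (moebius a b c d z) (moebius a b c d ζ) := infDist_le_dist_of_mem hfζ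
    _ = ‖a * d - b * c‖ * (dist z ζ * ‖c * z + d‖) / (‖c * z + d‖ ^ 2 * ‖c * ζ + d‖) := by
      rw [dist_moebius (hpole z hz) (norm_pos_iff.1 hζd)]
      field_simp
    _ ≤ ‖a * d - b * c‖ * (2 * infDist z Dᶜ * ‖c * ζ + d‖) / (‖c * z + d‖ ^ 2 * ‖c * ζ + d‖) := by
      gcongr
    _ = 2 * ‖deriv (moebius a b c d) z‖ * infDist z Dᶜ := by
      rw [norm_deriv_moebius (hpole z hz)]
      field_simp

end Moebius

theorem mDensity_moebius_general (D₁ D₂ : Set ℂ)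
    (hD₁open : IsOpen D₁)
    (hD₁bdd : Bornology.IsBounded D₁)
    (hD₂open : IsOpen D₂)
    (hD₂bdd : Bornology.IsBounded D₂)
    (a b c d : ℂ) (habcd : a * d - b * c ≠ 0)
    (f : ℂ → ℂ) (hf : ∀ z : ℂ, f z = (a * z + b) / (c * z + d))
    (hpole : ∀ z ∈ closure D₁, c * z + d ≠ 0)
    (hmaps : f '' D₁ = D₂)
    (z : ℂ) (hz : z ∈ D₁) :
    mDensity D₁ z ≤ 4 * ‖deriv f z‖ * mDensity D₂ (f z) := by
  have hf' : f = moebius a b c d := funext hf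
  have hfz : f z ∈ D₂ := hmaps ▸ mem_image_of_mem f hz
  have key : bdist D₂ (f z) ≤ 2 * ‖deriv f z‖ * bdist D₁ z := by
    rw [bdist_eq_infDist_compl hz, bdist_eq_infDist_compl hfz, ← hmaps, hf']
    exact infDist_compl_image_moebius_le habcd hD₁open hD₁bdd
      (fun w hw => hpole w (subset_closure hw)) hz
  have hδ₁ := bdist_pos hD₁open hD₁bdd hz
  have hδ₂ := bdist_pos hD₂open hD₂bdd hfz
  calc mDensity D₁ z ≤ 2 / bdist D₁ z :=
        mDensity_le_two_div_bdist (two_mul_bdist_le_diam hD₁bdd hz)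
    _ ≤ 4 * ‖deriv f z‖ / bdist D₂ (f z) := by
      rw [div_le_div_iff₀ hδ₁ hδ₂]
      linarith
    _ ≤ 4 * ‖deriv f z‖ * mDensity D₂ (f z) := by
      rw [div_eq_mul_inv]
      gcongr
      exact inv_bdist_le_mDensity (two_mul_bdist_le_diam hD₂bdd hfz)

/-- Corollary: Möbius quasi-invariance of the m-density.
If $f(z) = (az+b)/(cz+d)$, $ad − bc ≠ 0$, maps a bounded proper subdomain
$D_1 ⊂ ℂ$ onto $D_2$ (pole outside the closure of $D_1$), then
$m_{D_1}(z) ≤ 4 |f'(z)| m_{D_2}(f(z))$ for all $z ∈ D_1$. -/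
theorem mDensity_moebius (D₁ D₂ : Set ℂ)
    (hD₁open : IsOpen D₁) (hD₁conn : IsConnected D₁)
    (hD₁bdd : Bornology.IsBounded D₁) (hD₁proper : D₁ ≠ Set.univ)
    (hD₂open : IsOpen D₂) (hD₂conn : IsConnected D₂)
    (hD₂bdd : Bornology.IsBounded D₂) (hD₂proper : D₂ ≠ Set.univ)
    (a b c d : ℂ) (habcd : a * d - b * c ≠ 0)
    (f : ℂ → ℂ) (hf : ∀ z : ℂ, f z = (a * z + b) / (c * z + d))
    (hpole : ∀ z ∈ closure D₁, c * z + d ≠ 0)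
    (hmaps : f '' D₁ = D₂)
    (z : ℂ) (hz : z ∈ D₁) :
    mDensity D₁ z ≤ 4 * ‖deriv f z‖ * mDensity D₂ (f z) :=
  mDensity_moebius_general D₁ D₂ hD₁open hD₁bdd hD₂open hD₂bdd a b c d habcd f hf hpole hmaps z hz
end

section
/- Let R > 1 and consider the density ρ(z) = 2R³/((R|z| − 1)(2R² − R|z| + 1)) of the m-metric on the region {z ∈ ℂ : 1/R < |z| < (1 + R²)/(2R)} of the annulus A_R = {z : 1/R < |z| < R}. Then at every point z of this region the Gaussian curvature K(z) = −Δ(log ρ)(z)/ρ(z)² equals −(1/(2R⁵|z|))·[R⁴(2 + |z|²) − 4R³|z| + R²(3 + |z|²) − 2R|z| + 1]. -/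
/-!
`log ρ` is radial, `log ρ(w) = g(|w|)`. Along the horizontal and vertical lines through `z` the
second derivative of `g(|·|)` is `g''·(x/r)² + g'·(1 − (x/r)²)/r` with `x = Re z`, resp. `Im z`,
and `r = |z|`; adding the two gives the radial Laplacian `g''(r) + g'(r)/r`. For
`g(r) = log 2R³ − log(Rr − 1) − log(2R² − Rr + 1)` both factors are positive on the given range,
and the curvature formula is then an identity of rational functions.
-/

open Metric Set

/-- The Laplacian `Δf = ∂²f/∂x² + ∂²f/∂y²` of a function `f : ℂ → ℝ`, identifying
`ℂ` with `ℝ²`: the sum of the second derivatives of `f` along the horizontal line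
`t ↦ z + t` and the vertical line `t ↦ z + t·i` through `z`. -/
noncomputable def laplacian (f : ℂ → ℝ) (z : ℂ) : ℝ :=
  deriv (deriv (fun t : ℝ => f (z + t))) 0 +
    deriv (deriv (fun t : ℝ => f (z + t * Complex.I))) 0

open Filter Topology RealInnerProductSpace

section RadialFunction

variable {E : Type*} [NormedAddCommGroup E] [InnerProductSpace ℝ E]

theorem hasDerivAt_norm_add_smul {z v : E} {t : ℝ} (h : z + t • v ≠ 0) :
    HasDerivAt (fun s : ℝ => ‖z + s • v‖) (⟪z + t • v, v⟫ / ‖z + t • v‖) t := by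
  have hline : HasDerivAt (fun s : ℝ => z + s • v) v t :=
    ((hasDerivAt_id t).smul_const v).const_add z |>.congr_deriv (one_smul ℝ v)
  have hsq := hline.norm_sq.sqrt (by positivity)
  simp only [Real.sqrt_sq (norm_nonneg _)] at hsq
  convert hsq using 1
  ring

theorem deriv_deriv_comp_norm_add_smul {g g' : ℝ → ℝ} {g'' : ℝ} {z : E} (v : E) (hz : z ≠ 0)
    (hg : ∀ᶠ r in 𝓝 ‖z‖, HasDerivAt g (g' r) r) (hg' : HasDerivAt g' g'' ‖z‖) :
    deriv (deriv fun t : ℝ => g ‖z + t • v‖) 0 =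
      g'' * (⟪z, v⟫ / ‖z‖) ^ 2 + g' ‖z‖ * (‖v‖ ^ 2 - (⟪z, v⟫ / ‖z‖) ^ 2) / ‖z‖ := by
  have hcont : ContinuousAt (fun t : ℝ => z + t • v) 0 := by fun_prop
  have hnorm_cont : ContinuousAt (fun t : ℝ => ‖z + t • v‖) 0 := hcont.norm
  have hne : ∀ᶠ t in 𝓝 (0 : ℝ), z + t • v ≠ 0 := hcont.eventually_ne (by simpa using hz)
  have hg_near : ∀ᶠ t in 𝓝 (0 : ℝ), HasDerivAt g (g' ‖z + t • v‖) ‖z + t • v‖ :=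
    hnorm_cont.eventually (by simpa using hg)
  have hfirst : deriv (fun t : ℝ => g ‖z + t • v‖) =ᶠ[𝓝 0]
      fun t => g' ‖z + t • v‖ * (⟪z + t • v, v⟫ / ‖z + t • v‖) := by
    filter_upwards [hne, hg_near] with t ht hgt
    exact (hgt.comp t (hasDerivAt_norm_add_smul ht)).deriv
  rw [hfirst.deriv_eq]
  have hs := hasDerivAt_norm_add_smul (t := 0) (v := v) (by simpa using hz)
  have hinner : HasDerivAt (fun t : ℝ => ⟪z + t • v, v⟫) (‖v‖ ^ 2) 0 := by
    have : (fun t : ℝ => ⟪z + t • v, v⟫) = fun t => ⟪z, v⟫ + t * ‖v‖ ^ 2 := by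
      funext t; rw [inner_add_left, real_inner_smul_left, real_inner_self_eq_norm_sq]
    rw [this]
    simpa using ((hasDerivAt_id (0:ℝ)).mul_const (‖v‖ ^ 2)).const_add ⟪z, v⟫
  have h := (hg'.comp_of_eq 0 hs (by simp)).mul (hinner.div hs (by simpa using hz))
  refine h.deriv.trans ?_
  simp only [Pi.div_apply, Function.comp_apply, zero_smul, add_zero]
  have : ‖z‖ ≠ 0 := norm_ne_zero_iff.mpr hz
  field_simp

end RadialFunction

theorem laplacian_comp_norm {g g' : ℝ → ℝ} {g'' : ℝ} {z : ℂ} (hz : z ≠ 0)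
    (hg : ∀ᶠ r in 𝓝 ‖z‖, HasDerivAt g (g' r) r) (hg' : HasDerivAt g' g'' ‖z‖) :
    laplacian (fun w => g ‖w‖) z = g'' + g' ‖z‖ / ‖z‖ := by
  have hre := deriv_deriv_comp_norm_add_smul 1 hz hg hg'
  have him := deriv_deriv_comp_norm_add_smul Complex.I hz hg hg'
  simp only [Complex.real_smul, mul_one, Complex.inner, one_mul, Complex.conj_re, norm_one, one_pow,
    Complex.mul_re, Complex.I_re, zero_mul, Complex.I_im, Complex.conj_im, mul_neg, sub_neg_eq_add,
    zero_add, Complex.norm_I] at hre him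
  rw [laplacian, hre, him]
  have hunit : (z.re / ‖z‖) ^ 2 + (z.im / ‖z‖) ^ 2 = 1 := by
    rw [div_pow, div_pow, ← add_div, ← Complex.normSq_add_mul_I, ← Complex.sq_norm,
      Complex.re_add_im, div_self (by positivity)]
  linear_combination (g'' - g' ‖z‖ / ‖z‖) * hunit

section MDensity

variable {R r : ℝ}

theorem mDensity_factors_pos (hR : 1 < R) (h₁ : 1 / R < r) (h₂ : r < (1 + R ^ 2) / (2 * R)) :
    0 < R * r - 1 ∧ 0 < 2 * R ^ 2 - R * r + 1 := by
  have hR₀ : 0 < R := by linarith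
  constructor
  · have := (div_lt_iff₀ hR₀).mp h₁; linarith
  · have := (lt_div_iff₀ (by positivity : (0:ℝ) < 2 * R)).mp h₂; nlinarith

theorem hasDerivAt_mDensity_factors (R r : ℝ) :
    HasDerivAt (fun s => R * s - 1) R r ∧ HasDerivAt (fun s => 2 * R ^ 2 - R * s + 1) (-R) r :=
  ⟨by simpa using ((hasDerivAt_id r).const_mul R).sub_const 1,
    by simpa using (((hasDerivAt_id r).const_mul R).const_sub (2 * R ^ 2)).add_const 1⟩

theorem hasDerivAt_log_mDensity (hR : R ≠ 0) (hA : R * r - 1 ≠ 0)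
    (hB : 2 * R ^ 2 - R * r + 1 ≠ 0) :
    HasDerivAt (fun s => Real.log (2 * R ^ 3 / ((R * s - 1) * (2 * R ^ 2 - R * s + 1))))
      (R / (2 * R ^ 2 - R * r + 1) - R / (R * r - 1)) r := by
  obtain ⟨hA', hB'⟩ := hasDerivAt_mDensity_factors R r
  have h := ((hasDerivAt_const r (2 * R ^ 3)).div (hA'.mul hB') (mul_ne_zero hA hB)).log
    (div_ne_zero (by positivity) (mul_ne_zero hA hB))
  simp only [Pi.div_apply, Pi.mul_apply] at h
  convert h using 1
  -- `field_simp` only sees the side conditions `hA`, `hB` if the factors are atoms.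
  generalize R * r - 1 = A at hA ⊢
  generalize 2 * R ^ 2 - R * r + 1 = B at hB ⊢
  field_simp
  ring

theorem hasDerivAt_log_mDensity_deriv (hA : R * r - 1 ≠ 0) (hB : 2 * R ^ 2 - R * r + 1 ≠ 0) :
    HasDerivAt (fun s => R / (2 * R ^ 2 - R * s + 1) - R / (R * s - 1))
      (R ^ 2 / (R * r - 1) ^ 2 + R ^ 2 / (2 * R ^ 2 - R * r + 1) ^ 2) r := by
  obtain ⟨hA', hB'⟩ := hasDerivAt_mDensity_factors R r
  exact (((hasDerivAt_const r R).fun_div hB' hB).sub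
    ((hasDerivAt_const r R).fun_div hA' hA)).congr_deriv (by ring)

end MDensity

/-- Curvature of the m-metric in the annulus.
For the density `ρ(z) = 2R³/((R|z| − 1)(2R² − R|z| + 1))` of the m-metric on the
region `1/R < |z| < (1 + R²)/(2R)` of the annulus `A_R`, the Gaussian curvature
`K(z) = −Δ(log ρ)(z)/ρ(z)²` equals
`−(1/(2R⁵|z|))·[R⁴(2 + |z|²) − 4R³|z| + R²(3 + |z|²) − 2R|z| + 1]`. -/
theorem curvature_annulus (R : ℝ) (hR : 1 < R)
    (ρ : ℂ → ℝ)
    (hρ : ∀ w : ℂ, ρ w = 2 * R ^ 3 / ((R * ‖w‖ - 1) * (2 * R ^ 2 - R * ‖w‖ + 1)))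
    (z : ℂ) (hz₁ : 1 / R < ‖z‖) (hz₂ : ‖z‖ < (1 + R ^ 2) / (2 * R)) :
    -(laplacian (fun w => Real.log (ρ w)) z) / (ρ z) ^ 2
      = -(1 / (2 * R ^ 5 * ‖z‖)) *
          (R ^ 4 * (2 + ‖z‖ ^ 2) - 4 * R ^ 3 * ‖z‖ + R ^ 2 * (3 + ‖z‖ ^ 2)
            - 2 * R * ‖z‖ + 1) := by
  have hR₀ : 0 < R := by linarith
  have hz : 0 < ‖z‖ := lt_trans (by positivity) hz₁
  obtain ⟨hA, hB⟩ := mDensity_factors_pos hR hz₁ hz₂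
  have hg : ∀ᶠ r in 𝓝 ‖z‖, HasDerivAt
      (fun s => Real.log (2 * R ^ 3 / ((R * s - 1) * (2 * R ^ 2 - R * s + 1))))
      (R / (2 * R ^ 2 - R * r + 1) - R / (R * r - 1)) r := by
    filter_upwards [Ioo_mem_nhds hz₁ hz₂] with r hr
    obtain ⟨hA, hB⟩ := mDensity_factors_pos hR hr.1 hr.2
    exact hasDerivAt_log_mDensity hR₀.ne' hA.ne' hB.ne'
  have hlap := laplacian_comp_norm (norm_pos_iff.mp hz) hg
    (hasDerivAt_log_mDensity_deriv hA.ne' hB.ne')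
  simp only [← hρ] at hlap
  rw [hlap, hρ]
  generalize ‖z‖ = r at hz hA hB ⊢
  generalize hA_def : R * r - 1 = A at hA ⊢
  generalize hB_def : 2 * R ^ 2 - R * r + 1 = B at hB ⊢
  field_simp
  subst hA_def hB_def
  ring
end
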